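/- arXiv:2501.14643 — 8 statements merged into one kernel-verified Lean document; each statement's English description precedes it below -/
import Mathlib

section
/- If s : ℕ → ℂ and t : ℕ → ℂ each satisfy a linear recurrence with constant coefficients (of orders r₁ and r₂ respectively, with nonzero constant term), then the pointwise product sequence (s(n)·t(n)) also satisfies a linear recurrence with constant coefficients, of order at most r₁·r₂. -/
open Finset Polynomial Matrix Kronecker

lemma aux_companion (u : ℕ → ℂ) (r : ℕ) (hr : 0 < r) (c : ℕ → ℂ) (hc : c 0 ≠ 0)
    (h : ∀ n, u (n + r) = ∑ i ∈ Finset.range r, c i * u (n + i)) :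
    ∃ A : Matrix (Fin r) (Fin r) ℂ, A.det ≠ 0 ∧
      ∀ n, A.mulVec (fun i : Fin r => u (n + i)) = fun i : Fin r => u (n + 1 + i) := by
  set A : Matrix (Fin r) (Fin r) ℂ :=
    fun i j => if h : (i : ℕ) + 1 < r then (if (j : ℕ) = (i : ℕ) + 1 then 1 else 0) else c j
    with hA
  have key : ∀ (v : Fin r → ℂ) (i : Fin r),
      (A.mulVec v) i =
        if h : (i : ℕ) + 1 < r then v ⟨(i : ℕ) + 1, h⟩ else ∑ j : Fin r, c j * v j := by
    intro v i
    by_cases hi : (i : ℕ) + 1 < r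
    · simp only [Matrix.mulVec, dotProduct, hA, dif_pos hi]
      rw [Finset.sum_eq_single (⟨(i : ℕ) + 1, hi⟩ : Fin r)]
      · simp
      · intro b _ hb
        have : (b : ℕ) ≠ (i : ℕ) + 1 := fun hh => hb (Fin.ext hh)
        simp [this]
      · simp
    · simp only [Matrix.mulVec, dotProduct, hA, dif_neg hi]
  refine ⟨A, ?_, ?_⟩
  · intro hdet
    obtain ⟨v, hv, hv0⟩ := (Matrix.exists_mulVec_eq_zero_iff).2 hdet
    apply hv
    have hpos : ∀ k : Fin r, 0 < (k : ℕ) → v k = 0 := by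
      intro k hk
      have hlt : (k : ℕ) - 1 + 1 < r := by omega
      have hkey := key v ⟨(k : ℕ) - 1, by omega⟩
      rw [hv0] at hkey
      simp only [Pi.zero_apply] at hkey
      rw [dif_pos hlt] at hkey
      have hkk : (⟨(k : ℕ) - 1 + 1, hlt⟩ : Fin r) = k := Fin.ext (by simp; omega)
      rw [hkk] at hkey
      exact hkey.symm
    have hkey := key v ⟨r - 1, by omega⟩
    rw [hv0] at hkey
    simp only [Pi.zero_apply] at hkey
    have hnlt : ¬ ((⟨r - 1, by omega⟩ : Fin r) : ℕ) + 1 < r := by simp; omega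
    rw [dif_neg hnlt] at hkey
    have hsum : ∑ j : Fin r, c ↑j * v j = c ↑(⟨0, hr⟩ : Fin r) * v ⟨0, hr⟩ :=
      Finset.sum_eq_single_of_mem _ (Finset.mem_univ _) (fun b _ hb => by
        have hb' : 0 < (b : ℕ) := Nat.pos_of_ne_zero (fun h0 => hb (Fin.ext (by simp [h0])))
        rw [hpos b hb', mul_zero])
    rw [hsum] at hkey
    have hv00 : v ⟨0, hr⟩ = 0 := (mul_eq_zero.mp hkey.symm).resolve_left hc
    funext k
    rcases Nat.eq_zero_or_pos (k : ℕ) with h0 | h0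
    · have hk0 : k = ⟨0, hr⟩ := Fin.ext (by simp [h0])
      rw [hk0]; exact hv00
    · exact hpos k h0
  · intro n
    funext i
    rw [key]
    by_cases hi : (i : ℕ) + 1 < r
    · rw [dif_pos hi]
      show u (n + ((i : ℕ) + 1)) = u (n + 1 + i)
      congr 1; omega
    · rw [dif_neg hi]
      have h2 : n + 1 + (i : ℕ) = n + r := by omega
      rw [h2, h n]
      exact Fin.sum_univ_eq_sum_range (fun j => c j * u (n + j)) r

lemma my_sum_mulVec {ι n : Type*} [Fintype n] (sfin : Finset ι)
    (g : ι → Matrix n n ℂ) (w : n → ℂ) :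
    (∑ i ∈ sfin, g i).mulVec w = ∑ i ∈ sfin, (g i).mulVec w := by
  funext p
  simp only [Matrix.mulVec, dotProduct, Finset.sum_apply, Matrix.sum_apply,
    Finset.sum_mul]
  rw [Finset.sum_comm]

/-- If `s` and `t` each satisfy a constant-coefficient linear recurrence with nonzero
constant term (of orders `r₁`, `r₂`), then the pointwise product satisfies such a
recurrence of order at most `r₁ * r₂`. -/
theorem stmt1 (s t : ℕ → ℂ) (r₁ r₂ : ℕ) (hr₁ : 0 < r₁) (hr₂ : 0 < r₂)
    (c : ℕ → ℂ) (hc0 : c 0 ≠ 0)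
    (hs : ∀ n : ℕ, s (n + r₁) = ∑ i ∈ Finset.range r₁, c i * s (n + i))
    (d : ℕ → ℂ) (hd0 : d 0 ≠ 0)
    (ht : ∀ n : ℕ, t (n + r₂) = ∑ i ∈ Finset.range r₂, d i * t (n + i)) :
    ∃ r : ℕ, r ≤ r₁ * r₂ ∧ ∃ e : ℕ → ℂ, e 0 ≠ 0 ∧
      ∀ n : ℕ, s (n + r) * t (n + r) = ∑ i ∈ Finset.range r, e i * (s (n + i) * t (n + i)) := by
  obtain ⟨A, hAdet, hAshift⟩ := aux_companion s r₁ hr₁ c hc0 hs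
  obtain ⟨B, hBdet, hBshift⟩ := aux_companion t r₂ hr₂ d hd0 ht
  set M : Matrix (Fin r₁ × Fin r₂) (Fin r₁ × Fin r₂) ℂ := A ⊗ₖ B with hM
  set W : ℕ → (Fin r₁ × Fin r₂) → ℂ := fun n p => s (n + p.1) * t (n + p.2) with hW
  have step : ∀ n, M.mulVec (W n) = W (n + 1) := by
    intro n
    funext p
    have hA1 := congrFun (hAshift n) p.1
    have hB1 := congrFun (hBshift n) p.2
    calc (M.mulVec (W n)) p
        = ∑ q : Fin r₁ × Fin r₂, (A p.1 q.1 * B p.2 q.2) * (s (n + q.1) * t (n + q.2)) := by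
          simp [hM, Matrix.mulVec, dotProduct, Matrix.kroneckerMap_apply, hW]
      _ = ∑ k : Fin r₁, ∑ l : Fin r₂, (A p.1 k * s (n + k)) * (B p.2 l * t (n + l)) := by
          rw [Fintype.sum_prod_type]
          exact Finset.sum_congr rfl fun k _ => Finset.sum_congr rfl fun l _ => by ring
      _ = (∑ k : Fin r₁, A p.1 k * s (n + k)) * (∑ l : Fin r₂, B p.2 l * t (n + l)) := by
          rw [Finset.sum_mul_sum]
      _ = s (n + 1 + p.1) * t (n + 1 + p.2) := by
          rw [show (∑ k : Fin r₁, A p.1 k * s (n + k)) = s (n + 1 + p.1) from hA1,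
            show (∑ l : Fin r₂, B p.2 l * t (n + l)) = t (n + 1 + p.2) from hB1]
      _ = W (n + 1) p := rfl
  have iter : ∀ k n, (M ^ k).mulVec (W n) = W (n + k) := by
    intro k
    induction k with
    | zero => intro n; simp [Matrix.one_mulVec]
    | succ k ih =>
      intro n
      rw [pow_succ, ← Matrix.mulVec_mulVec, step n, ih (n + 1),
        show n + 1 + k = n + (k + 1) from by omega]
  set N := r₁ * r₂ with hN
  have hcard : Fintype.card (Fin r₁ × Fin r₂) = N := by simp [hN]
  set P := M.charpoly with hP
  have hdeg : P.natDegree = N := by rw [hP, Matrix.charpoly_natDegree_eq_dim, hcard]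
  have hCH : ∑ i ∈ Finset.range (N + 1), P.coeff i • M ^ i = 0 := by
    have := Matrix.aeval_self_charpoly M
    rwa [Polynomial.aeval_eq_sum_range, hdeg] at this
  have hdetM : M.det ≠ 0 := by
    rw [hM, Matrix.det_kronecker]
    exact mul_ne_zero (pow_ne_zero _ hAdet) (pow_ne_zero _ hBdet)
  have hc0' : P.coeff 0 ≠ 0 := by
    intro hzero
    apply hdetM
    rw [Matrix.det_eq_sign_charpoly_coeff, ← hP, hzero, mul_zero]
  have hcoeffN : P.coeff N = 1 := by
    have := (Matrix.charpoly_monic M).coeff_natDegree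
    rwa [← hP, hdeg] at this
  set p₀ : Fin r₁ × Fin r₂ := (⟨0, hr₁⟩, ⟨0, hr₂⟩) with hp₀
  have hWp : ∀ m, W m p₀ = s m * t m := by
    intro m; simp [hW, hp₀]
  have key : ∀ n, ∑ i ∈ Finset.range (N + 1), P.coeff i * (s (n + i) * t (n + i)) = 0 := by
    intro n
    have := congrArg (fun Mat => Mat.mulVec (W n) p₀) hCH
    simp only [Matrix.zero_mulVec, Pi.zero_apply] at this
    rw [my_sum_mulVec] at this
    simp only [Matrix.smul_mulVec, iter] at this
    simpa only [Finset.sum_apply, Pi.smul_apply, smul_eq_mul, hWp] using this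
  refine ⟨N, le_refl _, fun i => -P.coeff i, by simpa using hc0', fun n => ?_⟩
  have hk := key n
  rw [Finset.sum_range_succ, hcoeffN, one_mul] at hk
  have : s (n + N) * t (n + N) = -∑ i ∈ Finset.range N, P.coeff i * (s (n + i) * t (n + i)) := by
    exact eq_neg_of_add_eq_zero_right hk
  rw [this, ← Finset.sum_neg_distrib]
  exact Finset.sum_congr rfl fun i _ => by ring
end

section
/- For every positive integer M, the sequence (F(n)^M)_{n≥0} of M-th powers of the Fibonacci numbers satisfies a linear recurrence of order M+1 with constant coefficients, but does not satisfy any linear recurrence of order M. -/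
open Finset Polynomial goldenRatio

noncomputable section

/-- The geometric ratios `φ^j ψ^(M-j)`. -/
def rt (M : ℕ) (j : Fin (M + 1)) : ℝ := φ ^ (j : ℕ) * ψ ^ (M - (j : ℕ))

/-- Coefficients in binomial expansion of `fib n ^ M`. -/
def cf (M : ℕ) (j : Fin (M + 1)) : ℝ :=
  (-1) ^ ((j : ℕ) + M) * (M.choose j) / (Real.sqrt 5) ^ M

lemma abs_goldConj : |ψ| = φ⁻¹ := by
  have h : φ * |ψ| = 1 := by
    rw [← abs_of_pos Real.goldenRatio_pos, ← abs_mul, Real.goldenRatio_mul_goldenConj]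
    simp
  exact eq_inv_of_mul_eq_one_right h

lemma rt_injective (M : ℕ) : Function.Injective (rt M) := by
  have habs : ∀ j : Fin (M + 1), |rt M j| * φ ^ M = φ ^ (2 * (j : ℕ)) := by
    intro j
    have hj : (j : ℕ) ≤ M := Nat.lt_succ_iff.mp j.isLt
    rw [rt, abs_mul, abs_pow, abs_pow, abs_goldConj, abs_of_pos Real.goldenRatio_pos]
    rw [inv_pow]
    have hne : φ ^ (M - (j:ℕ)) ≠ 0 := pow_ne_zero _ Real.goldenRatio_ne_zero
    have key : φ ^ ((j:ℕ) + M) = φ ^ (2*(j:ℕ) + (M - (j:ℕ))) := by congr 1; omega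
    rw [mul_right_comm, ← div_eq_mul_inv, div_eq_iff hne, ← pow_add, key, pow_add]
  intro j k hjk
  have h2 : φ ^ (2 * (j : ℕ)) = φ ^ (2 * (k : ℕ)) := by
    rw [← habs j, ← habs k, hjk]
  have h3 := pow_right_injective₀ Real.goldenRatio_pos (ne_of_gt Real.one_lt_goldenRatio) h2
  exact Fin.ext (by omega)

lemma cf_ne_zero (M : ℕ) (j : Fin (M + 1)) : cf M j ≠ 0 := by
  have h5 : Real.sqrt 5 ≠ 0 := by positivity
  have hc : (M.choose j : ℝ) ≠ 0 := by
    exact_mod_cast (Nat.choose_pos (Nat.lt_succ_iff.mp j.isLt)).ne'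
  simp [cf, h5, hc]

/-- The key expansion. -/
lemma fib_pow_eq (M : ℕ) (n : ℕ) :
    ((Nat.fib n : ℝ)) ^ M = ∑ j : Fin (M + 1), cf M j * rt M j ^ n := by
  rw [Real.coe_fib_eq, div_pow, sub_pow]
  rw [Finset.sum_div, ← Fin.sum_univ_eq_sum_range (fun m => _)]
  refine Finset.sum_congr rfl fun j _ => ?_
  rw [cf, rt, mul_pow, ← pow_mul, ← pow_mul, ← pow_mul, ← pow_mul]
  ring_nf

end

open Polynomial goldenRatio

/-- For every positive `M`, the `M`-th powers of the Fibonacci numbers satisfy a linear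
recurrence of order `M + 1` with constant (real) coefficients, but no linear recurrence
of order `M`. -/
theorem stmt2 (M : ℕ) (hM : 0 < M) :
    (∃ c : ℕ → ℝ, ∀ n : ℕ,
        ((Nat.fib (n + (M + 1)) : ℝ)) ^ M =
          ∑ i ∈ Finset.range (M + 1), c i * ((Nat.fib (n + i) : ℝ)) ^ M) ∧
    ¬ ∃ c : ℕ → ℝ, ∀ n : ℕ,
        ((Nat.fib (n + M) : ℝ)) ^ M =
          ∑ i ∈ Finset.range M, c i * ((Nat.fib (n + i) : ℝ)) ^ M := by
  constructor
  · -- positive part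
    set p : ℝ[X] := ∏ j : Fin (M + 1), (X - C (rt M j)) with hp
    have hm : p.Monic := monic_prod_of_monic _ _ fun j _ => monic_X_sub_C _
    have hdeg : p.natDegree = M + 1 := by
      rw [hp, natDegree_prod _ _ (fun j _ => X_sub_C_ne_zero _)]
      simp
    refine ⟨fun i => -(p.coeff i), fun n => ?_⟩
    have hroot : ∀ j : Fin (M + 1),
        rt M j ^ (M + 1) = ∑ i ∈ Finset.range (M + 1), (-(p.coeff i)) * rt M j ^ i := by
      intro j
      have heval : p.eval (rt M j) = 0 := by
        rw [hp, eval_prod]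
        exact Finset.prod_eq_zero (Finset.mem_univ j) (by simp)
      have hlead : p.coeff (M + 1) = 1 := by
        have h := hm.coeff_natDegree
        rwa [hdeg] at h
      have hsum := Polynomial.eval_eq_sum_range (p := p) (rt M j)
      rw [hdeg, Finset.sum_range_succ, hlead, one_mul, heval] at hsum
      simp only [neg_mul]
      rw [Finset.sum_neg_distrib]
      linarith
    calc ((Nat.fib (n + (M + 1)) : ℝ)) ^ M
        = ∑ j : Fin (M + 1), cf M j * rt M j ^ (n + (M + 1)) := fib_pow_eq M _
      _ = ∑ j : Fin (M + 1), ∑ i ∈ Finset.range (M + 1),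
            (-(p.coeff i)) * (cf M j * rt M j ^ (n + i)) := by
          refine Finset.sum_congr rfl fun j _ => ?_
          rw [pow_add, ← mul_assoc, mul_comm _ (rt M j ^ (M + 1)), hroot j, Finset.sum_mul]
          refine Finset.sum_congr rfl fun i _ => ?_
          rw [pow_add]; ring
      _ = ∑ i ∈ Finset.range (M + 1), (-(p.coeff i)) * ((Nat.fib (n + i) : ℝ)) ^ M := by
          rw [Finset.sum_comm]
          refine Finset.sum_congr rfl fun i _ => ?_
          rw [← Finset.mul_sum, ← fib_pow_eq M (n + i)]
  · -- negative part
    rintro ⟨c, hc⟩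
    set b : Fin (M + 1) → ℝ :=
      fun j => cf M j * (rt M j ^ M - ∑ i ∈ Finset.range M, c i * rt M j ^ i) with hb
    have hzero : ∀ n : ℕ, ∑ j : Fin (M + 1), b j * rt M j ^ n = 0 := by
      intro n
      have e1 : ∀ j : Fin (M + 1), b j * rt M j ^ n =
          cf M j * rt M j ^ (n + M)
            - ∑ i ∈ Finset.range M, c i * (cf M j * rt M j ^ (n + i)) := by
        intro j
        rw [hb]
        simp only [sub_mul, mul_sub, Finset.mul_sum, Finset.sum_mul]
        congr 1
        · rw [pow_add]; ring
        · refine Finset.sum_congr rfl fun i _ => ?_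
          rw [pow_add]; ring
      rw [Finset.sum_congr rfl fun j _ => e1 j, Finset.sum_sub_distrib,
        ← fib_pow_eq M (n + M), Finset.sum_comm]
      have e3 : ∀ i ∈ Finset.range M,
          (∑ j : Fin (M + 1), c i * (cf M j * rt M j ^ (n + i)))
            = c i * ((Nat.fib (n + i) : ℝ)) ^ M := by
        intro i _
        rw [← Finset.mul_sum, ← fib_pow_eq]
      rw [Finset.sum_congr rfl e3, ← hc n, sub_self]
    have hb0 : b = 0 := by
      apply Matrix.eq_zero_of_mulVec_eq_zero
        (M := (Matrix.vandermonde (rt M)).transpose)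
        (by rw [Matrix.det_transpose]
            exact Matrix.det_vandermonde_ne_zero_iff.mpr (rt_injective M))
      funext i
      simpa [Matrix.mulVec, Matrix.vandermonde, dotProduct, mul_comm] using hzero i
    -- the polynomial q has M+1 distinct roots but degree ≤ M
    set q : ℝ[X] := X ^ M - ∑ i ∈ Finset.range M, C (c i) * X ^ i with hq
    have hqeval : ∀ j : Fin (M + 1), q.eval (rt M j) = 0 := by
      intro j
      have hbj : b j = 0 := by rw [hb0]; rfl
      rw [hb] at hbj
      have h2 : rt M j ^ M - ∑ i ∈ Finset.range M, c i * rt M j ^ i = 0 :=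
        (mul_eq_zero.mp hbj).resolve_left (cf_ne_zero M j)
      rw [hq]
      simp only [eval_sub, eval_pow, eval_X, eval_finset_sum, eval_mul, eval_C]
      exact h2
    have hqdeg : q.natDegree < M + 1 := by
      rw [hq]
      refine Nat.lt_succ_of_le (le_trans (natDegree_sub_le _ _) ?_)
      refine max_le (by simp) (le_trans (natDegree_sum_le _ _) ?_)
      rw [Finset.fold_max_le]
      refine ⟨Nat.zero_le _, fun i hi => le_trans (natDegree_C_mul_le _ _) ?_⟩
      rw [natDegree_X_pow]
      exact le_of_lt (Finset.mem_range.mp hi)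
    have hq0 : q = 0 :=
      Polynomial.eq_zero_of_natDegree_lt_card_of_eval_eq_zero q (rt_injective M) hqeval
        (by simpa using hqdeg)
    have hcoeff : q.coeff M = 1 := by
      rw [hq, coeff_sub, coeff_X_pow, if_pos rfl, finset_sum_coeff]
      have h4 : ∀ i ∈ Finset.range M, (C (c i) * X ^ i).coeff M = 0 := by
        intro i hi
        rw [coeff_C_mul, coeff_X_pow,
          if_neg (Nat.ne_of_lt (Finset.mem_range.mp hi)).symm, mul_zero]
      rw [Finset.sum_congr rfl h4]
      simp
    rw [hq0] at hcoeff
    simp at hcoeff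
end

section
/- The Fibonacci fourth powers satisfy F(n+5)^4 = 5·F(n+4)^4 + 15·F(n+3)^4 − 15·F(n+2)^4 − 5·F(n+1)^4 + F(n)^4 for all n ≥ 0. -/
theorem fourth_pow_recurrence_of_fib_rec {R : Type*} [CommRing R] (u : ℕ → R)
    (hu : ∀ n, u (n + 2) = u (n + 1) + u n) (n : ℕ) :
    u (n + 5) ^ 4 =
      5 * u (n + 4) ^ 4 + 15 * u (n + 3) ^ 4 - 15 * u (n + 2) ^ 4
        - 5 * u (n + 1) ^ 4 + u n ^ 4 := by
  have h2 : u (n + 2) = u (n + 1) + u n := hu n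
  have h3 : u (n + 3) = u (n + 2) + u (n + 1) := hu (n + 1)
  have h4 : u (n + 4) = u (n + 3) + u (n + 2) := hu (n + 2)
  have h5 : u (n + 5) = u (n + 4) + u (n + 3) := hu (n + 3)
  rw [h5, h4, h3, h2]
  ring

theorem stmt5_general (F : ℕ → ℤ)
    (hrec : ∀ n : ℕ, F (n + 2) = F (n + 1) + F n) :
    ∀ n : ℕ, F (n + 5) ^ 4 =
      5 * F (n + 4) ^ 4 + 15 * F (n + 3) ^ 4 - 15 * F (n + 2) ^ 4
        - 5 * F (n + 1) ^ 4 + F n ^ 4 :=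
  fourth_pow_recurrence_of_fib_rec F hrec

/-- The fourth powers of the Fibonacci numbers satisfy
`F(n+5)^4 = 5 F(n+4)^4 + 15 F(n+3)^4 - 15 F(n+2)^4 - 5 F(n+1)^4 + F(n)^4`. -/
theorem stmt5 (F : ℕ → ℤ) (h0 : F 0 = 0) (h1 : F 1 = 1)
    (hrec : ∀ n : ℕ, F (n + 2) = F (n + 1) + F n) :
    ∀ n : ℕ, F (n + 5) ^ 4 =
      5 * F (n + 4) ^ 4 + 15 * F (n + 3) ^ 4 - 15 * F (n + 2) ^ 4
        - 5 * F (n + 1) ^ 4 + F n ^ 4 :=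
  stmt5_general F hrec
end

section
/- For all positive integers M, k, r with k ≤ r, the identity r·Σ_{j=1}^{M} j·C(M+k−j−2, M−j) + (1−M)·C(M+k−1, M) = (r−k)·C(M+k−1, M−1) + C(M+k−1, M) holds. -/
open Finset

/-- Hockey-stick: `∑_{i=0}^{M} C(i+k-2, i) = C(M+k-1, M)` for `k ≥ 1`. -/
lemma aux_hockey (k : ℕ) (hk : 0 < k) :
    ∀ M : ℕ, ∑ i ∈ Finset.range (M + 1), (i + k - 2).choose i = (M + k - 1).choose M := by
  intro M
  induction M with
  | zero => simp
  | succ M ih =>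
      rw [Finset.sum_range_succ, ih]
      have h1 : M + 1 + k - 2 = M + k - 1 := by omega
      have h2 : M + 1 + k - 1 = (M + k - 1) + 1 := by omega
      rw [h1, h2, Nat.choose_succ_succ]

/-- `∑_{i<M} (M-i)·C(i+k-2, i) = C(M+k-1, M-1)` for `M, k ≥ 1`. -/
lemma aux_sum (k : ℕ) (hk : 0 < k) :
    ∀ M : ℕ, 0 < M → ∑ i ∈ Finset.range M, (M - i) * (i + k - 2).choose i
      = (M + k - 1).choose (M - 1) := by
  intro M
  induction M with
  | zero => intro h; exact absurd h (by omega)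
  | succ M ih =>
      intro _
      by_cases hM0 : M = 0
      · subst hM0; simp
      · have hM : 0 < M := Nat.pos_of_ne_zero hM0
        have e : ∀ i ∈ Finset.range (M + 1),
            (M + 1 - i) * (i + k - 2).choose i
              = (M - i) * (i + k - 2).choose i + (i + k - 2).choose i := by
          intro i hi
          simp only [Finset.mem_range, Nat.lt_succ_iff] at hi
          have h : M + 1 - i = (M - i) + 1 := by omega
          rw [h, add_mul, one_mul]
        rw [Finset.sum_congr rfl e, Finset.sum_add_distrib]
        have t : ∑ i ∈ Finset.range (M + 1), (M - i) * (i + k - 2).choose i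
            = ∑ i ∈ Finset.range M, (M - i) * (i + k - 2).choose i := by
          rw [Finset.sum_range_succ]; simp
        rw [t, ih hM, aux_hockey k hk M]
        have key : ((M + k - 1) + 1).choose ((M - 1) + 1)
            = (M + k - 1).choose (M - 1) + (M + k - 1).choose ((M - 1) + 1) :=
          Nat.choose_succ_succ _ _
        rw [show (M - 1) + 1 = M by omega, show (M + k - 1) + 1 = M + 1 + k - 1 by omega]
          at key
        rw [show M + 1 - 1 = M by omega]
        exact key.symm

/-- `M·C(M+k-1, M) = k·C(M+k-1, M-1)` for `M, k ≥ 1`. -/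
lemma aux_absorb (M k : ℕ) (hM : 0 < M) (hk : 0 < k) :
    M * (M + k - 1).choose M = k * (M + k - 1).choose (M - 1) := by
  have h1 := Nat.add_one_mul_choose_eq (M + k - 2) (M - 1)
  have h2 := Nat.add_one_mul_choose_eq (M + k - 2) (k - 1)
  rw [show M + k - 2 + 1 = M + k - 1 by omega, show M - 1 + 1 = M by omega] at h1
  rw [show M + k - 2 + 1 = M + k - 1 by omega, show k - 1 + 1 = k by omega] at h2
  have esymm : (M + k - 2).choose (M - 1) = (M + k - 2).choose (k - 1) := by
    rw [show M - 1 = (M + k - 2) - (k - 1) by omega, Nat.choose_symm (by omega)]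
  have esymm2 : (M + k - 1).choose (M - 1) = (M + k - 1).choose k := by
    rw [show M - 1 = (M + k - 1) - k by omega, Nat.choose_symm (by omega)]
  rw [esymm2]
  calc M * (M + k - 1).choose M = (M + k - 1).choose M * M := by ring
    _ = (M + k - 1) * (M + k - 2).choose (M - 1) := h1.symm
    _ = (M + k - 1) * (M + k - 2).choose (k - 1) := by rw [esymm]
    _ = (M + k - 1).choose k * k := h2
    _ = k * (M + k - 1).choose k := by ring

/-- Reindexing the sum. -/
lemma aux_reindex (M k : ℕ) :
    ∑ j ∈ Finset.Icc 1 M, j * (M + k - j - 2).choose (M - j)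
      = ∑ i ∈ Finset.range M, (M - i) * (i + k - 2).choose i := by
  apply Finset.sum_nbij' (fun j => M - j) (fun i => M - i)
  · intro j hj; simp only [Finset.mem_Icc] at hj; simp only [Finset.mem_range]; omega
  · intro i hi; simp only [Finset.mem_range] at hi; simp only [Finset.mem_Icc]; omega
  · intro j hj; simp only [Finset.mem_Icc] at hj; omega
  · intro i hi; simp only [Finset.mem_range] at hi; omega
  · intro j hj; simp only [Finset.mem_Icc] at hj
    have h1 : M - (M - j) = j := by omega
    have h2 : (M - j) + k - 2 = M + k - j - 2 := by omega
    rw [h1, h2]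

/-- The combinatorial identity
`r·Σ_{j=1}^{M} j·C(M+k−j−2, M−j) + (1−M)·C(M+k−1, M)
  = (r−k)·C(M+k−1, M−1) + C(M+k−1, M)` for positive integers `M, k, r` with `k ≤ r`. -/
theorem stmt10 (M k r : ℕ) (hM : 0 < M) (hk : 0 < k) (hr : 0 < r) (hkr : k ≤ r) :
    (r : ℤ) * ∑ j ∈ Finset.Icc 1 M, (j : ℤ) * ((M + k - j - 2).choose (M - j) : ℤ)
        + (1 - (M : ℤ)) * ((M + k - 1).choose M : ℤ)
      = ((r : ℤ) - (k : ℤ)) * ((M + k - 1).choose (M - 1) : ℤ)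
        + ((M + k - 1).choose M : ℤ) := by
  have hnat : ∑ j ∈ Finset.Icc 1 M, j * (M + k - j - 2).choose (M - j)
      = (M + k - 1).choose (M - 1) := (aux_reindex M k).trans (aux_sum k hk M hM)
  have hsum : (∑ j ∈ Finset.Icc 1 M, (j : ℤ) * ((M + k - j - 2).choose (M - j) : ℤ))
      = ((M + k - 1).choose (M - 1) : ℤ) := by
    calc (∑ j ∈ Finset.Icc 1 M, (j : ℤ) * ((M + k - j - 2).choose (M - j) : ℤ))
        = ((∑ j ∈ Finset.Icc 1 M, j * (M + k - j - 2).choose (M - j) : ℕ) : ℤ) := by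
          push_cast; ring
      _ = ((M + k - 1).choose (M - 1) : ℤ) := by rw [hnat]
  have habs : (M : ℤ) * ((M + k - 1).choose M : ℤ)
      = (k : ℤ) * ((M + k - 1).choose (M - 1) : ℤ) := by
    exact_mod_cast congrArg (Nat.cast : ℕ → ℤ) (aux_absorb M k hM hk)
  rw [hsum]
  linarith
end

section
/- For all positive integers r, M and k with k ≤ r, we have (r−k)·C(M+k−1, M−1) + C(M+k−1, M) ≤ C(M+r−1, M). In particular, the refined bound on rank(s^M) for a rank-r sequence with k distinct roots is at most the classical bound C(M+r−1, M). -/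
/-
Writing `n = M + k - 1` and `d = r - k`, the claim reads
`d * C(n, M - 1) + C(n, M) ≤ C(n + d, M)`. Each increment of `n` adds `C(n, M - 1)` to `C(n, M)`
by Pascal's rule, and `C(n, M - 1)` only grows with `n`.
-/

theorem Nat.mul_choose_add_choose_succ_le_choose_add (n m d : ℕ) :
    d * n.choose m + n.choose (m + 1) ≤ (n + d).choose (m + 1) := by
  induction d with
  | zero => simp
  | succ d ih =>
    calc (d + 1) * n.choose m + n.choose (m + 1)
        = n.choose m + (d * n.choose m + n.choose (m + 1)) := by ring
      _ ≤ (n + d).choose m + (n + d).choose (m + 1) :=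
          add_le_add (Nat.choose_le_choose m (n.le_add_right d)) ih
      _ = (n + (d + 1)).choose (m + 1) := (Nat.choose_succ_succ' _ _).symm

theorem stmt12_general (r M k : ℕ) (hM : 0 < M) (hkr : k ≤ r) :
    (r - k) * (M + k - 1).choose (M - 1) + (M + k - 1).choose M
      ≤ (M + r - 1).choose M := by
  have h := Nat.mul_choose_add_choose_succ_le_choose_add (M + k - 1) (M - 1) (r - k)
  rwa [Nat.sub_add_cancel hM, show M + k - 1 + (r - k) = M + r - 1 by omega] at h

/-- The refined bound is at most the classical one:
`(r−k)·C(M+k−1, M−1) + C(M+k−1, M) ≤ C(M+r−1, M)` for positive `r, M, k` with `k ≤ r`. -/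
theorem stmt12 (r M k : ℕ) (hr : 0 < r) (hM : 0 < M) (hk : 0 < k) (hkr : k ≤ r) :
    (r - k) * (M + k - 1).choose (M - 1) + (M + k - 1).choose M
      ≤ (M + r - 1).choose M :=
  stmt12_general r M k hM hkr
end

section
/- Let α, β be the two roots of a monic quadratic with rational coefficients x² − px + q (p, q ∈ ℚ, q ≠ 0) with α ≠ β. If α^K = β^K for some positive integer K, then the minimal such K belongs to {1, 2, 3, 4, 6} (and K=1 is excluded since α ≠ β, so K ∈ {2,3,4,6}). -/
/-- If `α ≠ β` are the roots of a monic rational quadratic `x² - p x + q` with `q ≠ 0`,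
and `K` is the least positive integer with `α^K = β^K`, then `K ∈ {2, 3, 4, 6}`. -/
theorem stmt14 (p q : ℚ) (hq : q ≠ 0) (α β : ℂ)
    (hα : α ^ 2 - (p : ℂ) * α + (q : ℂ) = 0)
    (hβ : β ^ 2 - (p : ℂ) * β + (q : ℂ) = 0)
    (hne : α ≠ β) (K : ℕ) (hK : 0 < K) (hpow : α ^ K = β ^ K)
    (hmin : ∀ L : ℕ, 0 < L → α ^ L = β ^ L → K ≤ L) :
    K = 2 ∨ K = 3 ∨ K = 4 ∨ K = 6 := by
  have hqC : (q : ℂ) ≠ 0 := by exact_mod_cast hq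
  have hsub : α - β ≠ 0 := sub_ne_zero.mpr hne
  have hsum : α + β = (p : ℂ) := by
    have h : (α - β) * (α + β - (p : ℂ)) = 0 := by linear_combination hα - hβ
    rcases mul_eq_zero.mp h with h | h
    · exact absurd h hsub
    · linear_combination h
  have hprod : α * β = (q : ℂ) := by linear_combination -hβ + β * hsum
  have hα0 : α ≠ 0 := fun h => hqC (by rw [← hprod, h, zero_mul])
  have hβ0 : β ≠ 0 := fun h => hqC (by rw [← hprod, h, mul_zero])
  set ζ : ℂ := α / β with hζdef
  have hζ0 : ζ ≠ 0 := div_ne_zero hα0 hβ0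
  have htrans : ∀ L : ℕ, ζ ^ L = 1 ↔ α ^ L = β ^ L := by
    intro L
    rw [hζdef, div_pow, div_eq_one_iff_eq (pow_ne_zero L hβ0)]
  have hζK : ζ ^ K = 1 := (htrans K).mpr hpow
  have hmin' : ∀ L : ℕ, 0 < L → ζ ^ L = 1 → K ≤ L := fun L hL h =>
    hmin L hL ((htrans L).mp h)
  have hζ1 : ζ ≠ 1 := by
    intro h
    exact hne (by rw [hζdef, div_eq_one_iff_eq hβ0] at h; exact h)
  set r : ℚ := (p ^ 2 - 2 * q) / q with hrdef
  have hrt : ζ + ζ⁻¹ = (r : ℂ) := by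
    rw [hζdef, hrdef]
    push_cast
    field_simp
    linear_combination (α*β*(α+β+(p:ℂ)))*hsum - (α+β)^2*hprod
  have hint : IsIntegral ℤ ζ := by
    refine IsIntegral.of_pow hK ?_
    rw [hζK]; exact isIntegral_one
  have hinv : ζ⁻¹ = ζ ^ (K - 1) := by
    refine inv_eq_of_mul_eq_one_right ?_
    rw [← pow_succ', Nat.sub_add_cancel hK]
    exact hζK
  have hintr : IsIntegral ℤ ((r : ℚ) : ℂ) := by
    rw [← hrt, hinv]
    exact hint.add (hint.pow _)
  have hintr' : IsIntegral ℤ r := by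
    have hinj : Function.Injective ((Rat.castHom ℂ).toIntAlgHom) :=
      (Rat.castHom ℂ).injective
    exact (isIntegral_algHom_iff (Rat.castHom ℂ).toIntAlgHom hinj).mp hintr
  obtain ⟨m, hm⟩ := IsIntegrallyClosed.isIntegral_iff.mp hintr'
  have hm' : (m : ℚ) = r := by exact_mod_cast hm
  have habs : ‖ζ‖ = 1 := by
    have h := congrArg (‖·‖) hζK
    rw [norm_pow, norm_one] at h
    rcases (pow_eq_one_iff_cases.mp h) with h | h | h
    · omega
    · exact h
    · nlinarith [norm_nonneg ζ]
  have hre : (r : ℝ) = 2 * ζ.re := by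
    have h1 : ζ⁻¹ = (starRingEnd ℂ) ζ := Complex.inv_eq_conj habs
    have h2 : ((r : ℝ) : ℂ) = ((2 * ζ.re : ℝ) : ℂ) := by
      push_cast
      rw [← hrt, h1, Complex.add_conj]
      push_cast; ring
    exact_mod_cast h2
  have hrele : |(r : ℝ)| ≤ 2 := by
    rw [hre, abs_mul]
    have := Complex.abs_re_le_norm ζ
    rw [habs] at this
    simp only [abs_two]
    nlinarith [abs_nonneg ζ.re]
  have hmabs : |(m : ℝ)| ≤ 2 := by
    have hcast : ((m : ℚ) : ℝ) = (r : ℝ) := by exact_mod_cast hm'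
    rw [show ((m : ℝ)) = ((m : ℚ) : ℝ) by push_cast; ring, hcast]
    exact hrele
  rw [abs_le] at hmabs
  have hml : -2 ≤ m := by exact_mod_cast hmabs.1
  have hmu : m ≤ 2 := by exact_mod_cast hmabs.2
  -- the quadratic satisfied by ζ
  have hquad : ζ ^ 2 + 1 = ((m : ℤ) : ℂ) * ζ := by
    have : ζ ^ 2 + 1 = (r : ℂ) * ζ := by
      rw [← hrt]; field_simp
    rw [this, ← hm']; push_cast; ring
  clear hrt hintr hintr' hm hm' habs hre hrele hmabs hα hβ hα0 hβ0 hsum hprod hpow hmin htrans hint hinv hζdef hrdef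
  interval_cases m <;> push_cast at hquad
  · -- m = -2 : ζ = -1, K = 2
    have hζ : ζ = -1 := by
      have h : (ζ + 1) ^ 2 = 0 := by linear_combination hquad
      have := pow_eq_zero_iff (n := 2) (by norm_num) |>.mp h
      linear_combination this
    have h2 : ζ ^ 2 = 1 := by rw [hζ]; norm_num
    have hle : K ≤ 2 := hmin' 2 (by norm_num) h2
    interval_cases K
    · rw [pow_one] at hζK; exact absurd hζK hζ1
    · left; rfl
  · -- m = -1 : ζ³ = 1, K = 3
    have h3 : ζ ^ 3 = 1 := by linear_combination (ζ - 1) * hquad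
    have hle : K ≤ 3 := hmin' 3 (by norm_num) h3
    interval_cases K
    · rw [pow_one] at hζK
      have : (3 : ℂ) = 0 := by linear_combination hquad - (ζ + 2) * hζK
      norm_num at this
    · have : (3 : ℂ) = 0 := by linear_combination (2 - ζ) * hquad + (ζ - 1) * hζK
      norm_num at this
    · right; left; rfl
  · -- m = 0 : ζ² = -1, K = 4
    have h4 : ζ ^ 4 = 1 := by linear_combination (ζ ^ 2 - 1) * hquad
    have hle : K ≤ 4 := hmin' 4 (by norm_num) h4
    interval_cases K
    · rw [pow_one] at hζK
      have : (2 : ℂ) = 0 := by linear_combination hquad - (ζ + 1) * hζK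
      norm_num at this
    · have : (2 : ℂ) = 0 := by linear_combination hquad - hζK
      norm_num at this
    · have : (2 : ℂ) = 0 := by linear_combination (1 + ζ * (1 - ζ)) * hquad + (ζ - 1) * hζK
      norm_num at this
    · right; right; left; rfl
  · -- m = 1 : ζ⁶ = 1, K = 6
    have h6 : ζ ^ 6 = 1 := by linear_combination ((ζ + 1) * (ζ ^ 3 - 1)) * hquad
    have hle : K ≤ 6 := hmin' 6 (by norm_num) h6
    interval_cases K
    · rw [pow_one] at hζK
      have : (1 : ℂ) = 0 := by linear_combination hquad - ζ * hζK
      norm_num at this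
    · have : (3 : ℂ) = 0 := by linear_combination (ζ + 2) * hquad + (-ζ - 1) * hζK
      norm_num at this
    · have : (2 : ℂ) = 0 := by linear_combination (ζ + 1) * hquad - hζK
      norm_num at this
    · have : (3 : ℂ) = 0 := by
        linear_combination (1 - ζ * (ζ + 1) * (ζ - 2)) * hquad + (ζ - 2) * hζK
      norm_num at this
    · have : (1 : ℂ) = 0 := by
        linear_combination (1 - (ζ - 1) * (ζ ^ 3 + ζ ^ 2 - 1)) * hquad + (ζ - 1) * hζK
      norm_num at this
    · right; right; right; rfl
  · -- m = 2 : ζ = 1, contradiction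
    exfalso
    have hζ : ζ = 1 := by
      have h : (ζ - 1) ^ 2 = 0 := by linear_combination hquad
      have := pow_eq_zero_iff (n := 2) (by norm_num) |>.mp h
      linear_combination this
    exact hζ1 hζ
end

section
/- If α and β = conj(α) are non-real complex conjugate roots of a quadratic with rational coefficients, and α^K = β^K for some positive integer K, then the argument of α is a rational multiple of π whose cosine squared is rational; hence by Niven's theorem arg(α) ∈ {π/6, π/4, π/3, π/2} modulo the symmetries of the unit circle (i.e., cos(arg α)² ∈ {0, 1/4, 1/2, 3/4, 1}). -/
open Complex

/-- If `α` is a non-real complex number with `α + conj α` and `α * conj α` rational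
(so `α` and `conj α` are the roots of a rational quadratic), and `α^K = (conj α)^K` for
some positive `K`, then `arg α` is a rational multiple of `π`, `cos (arg α) ^ 2` is
rational, and `cos (arg α) ^ 2 ∈ {0, 1/4, 1/2, 3/4, 1}`. -/
theorem stmt15 (α : ℂ) (hα : α.im ≠ 0) (p q : ℚ)
    (hp : α + (starRingEnd ℂ) α = (p : ℂ)) (hq : α * (starRingEnd ℂ) α = (q : ℂ))
    (K : ℕ) (hK : 0 < K) (hpow : α ^ K = ((starRingEnd ℂ) α) ^ K) :
    (∃ a b : ℤ, b ≠ 0 ∧ Complex.arg α = ((a : ℝ) / (b : ℝ)) * Real.pi) ∧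
    (∃ c : ℚ, Real.cos (Complex.arg α) ^ 2 = (c : ℝ)) ∧
    Real.cos (Complex.arg α) ^ 2 ∈ ({0, 1/4, 1/2, 3/4, 1} : Set ℝ) := by
  have hα0 : α ≠ 0 := fun h => hα (by simp [h])
  -- normSq α = q
  have hq' : (q : ℝ) = Complex.normSq α := by
    have h := Complex.mul_conj α
    rw [hq] at h
    exact_mod_cast h
  have hqpos : (0:ℝ) < (q:ℝ) := hq' ▸ Complex.normSq_pos.mpr hα0
  have hq0 : (q:ℚ) ≠ 0 := by exact_mod_cast hqpos.ne'
  -- re α = p/2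
  have hre : α.re = (p:ℝ)/2 := by
    have := Complex.add_conj α
    rw [hp] at this
    have h2 : ((p:ℝ):ℂ) = 2 * (α.re : ℂ) := by exact_mod_cast this
    have := congrArg Complex.re h2
    simp at this
    linarith
  -- Part 1
  have habs : ‖α‖ ≠ 0 := norm_ne_zero_iff.mpr hα0
  have h2K : α ^ (2*K) = (((‖α‖ : ℝ) : ℂ)) ^ (2*K) := by
    have : α ^ (2*K) = ((q:ℂ)) ^ K := by
      rw [two_mul, pow_add]
      nth_rewrite 2 [hpow]
      rw [← mul_pow, hq]
    rw [this]
    have : ((q:ℝ):ℂ) = (((‖α‖ : ℝ) : ℂ))^2 := by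
      rw_mod_cast [hq', ← Complex.sq_norm]
    rw [show ((q:ℂ)) = ((q:ℝ):ℂ) by push_cast; ring, this, ← pow_mul, mul_comm]
  have hexp : Complex.exp (((2*K : ℕ) : ℂ) * (α.arg * I)) = 1 := by
    have h := Complex.norm_mul_exp_arg_mul_I α
    have h2 : (((‖α‖ : ℝ) : ℂ) * Complex.exp (α.arg * I)) ^ (2*K) = (((‖α‖ : ℝ) : ℂ)) ^ (2*K) := by
      rw [h]; exact h2K
    rw [mul_pow, ← Complex.exp_nat_mul] at h2
    have habs' : (((‖α‖ : ℝ) : ℂ)) ^ (2*K) ≠ 0 := pow_ne_zero _ (by exact_mod_cast habs)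
    have := mul_left_cancel₀ habs' (h2.trans (mul_one _).symm)
    exact this
  obtain ⟨n, hn⟩ := Complex.exp_eq_one_iff.mp hexp
  have harg : α.arg = ((n:ℝ)/(K:ℝ)) * Real.pi := by
    have hn' : ((2*K*α.arg : ℝ) : ℂ) * I = ((n * (2*Real.pi) : ℝ) : ℂ) * I := by
      push_cast
      push_cast at hn
      linear_combination hn
    have := Complex.ofReal_injective (mul_right_cancel₀ Complex.I_ne_zero hn')
    have hKne : (K:ℝ) ≠ 0 := by positivity
    field_simp at this ⊢
    linarith
  -- Part 2
  set c : ℚ := p^2 / (4*q) with hc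
  have hcos : Real.cos α.arg ^ 2 = (c:ℝ) := by
    rw [Complex.cos_arg hα0, div_pow, hre, Complex.sq_norm, ← hq', hc]
    have hqR : (q:ℝ) ≠ 0 := hqpos.ne'
    push_cast
    rw [div_pow, div_div]
    norm_num
  refine ⟨⟨n, K, by exact_mod_cast hK.ne', harg⟩, ⟨c, hcos⟩, ?_⟩
  -- Part 3 : integrality
  set ζ : ℂ := α / (starRingEnd ℂ) α with hζ
  have hconj0 : (starRingEnd ℂ) α ≠ 0 := fun h => hα0 (by simpa using congrArg (starRingEnd ℂ) h)
  have hζK : ζ ^ K = 1 := by rw [hζ, div_pow, hpow, div_self (pow_ne_zero _ hconj0)]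
  have hζint : IsIntegral ℤ ζ := by
    refine ⟨Polynomial.X ^ K - Polynomial.C 1, Polynomial.monic_X_pow_sub_C 1 hK.ne', ?_⟩
    simp [hζK]
  have hζ0 : ζ ≠ 0 := div_ne_zero hα0 hconj0
  have hζinv : ζ⁻¹ = ζ ^ (K-1) := by
    field_simp
    rw [← pow_succ', Nat.sub_add_cancel hK, hζK]
  have htint : IsIntegral ℤ (ζ + ζ⁻¹) := hζint.add (hζinv ▸ hζint.pow _)
  -- ζ + ζ⁻¹ = 4c - 2
  have hζval : ζ + ζ⁻¹ = ((4*c - 2 : ℚ) : ℂ) := by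
    have hinv : ζ⁻¹ = (starRingEnd ℂ) α / α := by rw [hζ]; field_simp
    rw [hζ, hinv]
    have : α / (starRingEnd ℂ) α + (starRingEnd ℂ) α / α
        = (α^2 + ((starRingEnd ℂ) α)^2) / (α * (starRingEnd ℂ) α) := by
      field_simp
    rw [this, hq]
    have hnum : α^2 + ((starRingEnd ℂ) α)^2 = (p:ℂ)^2 - 2*(q:ℂ) := by
      have : (α + (starRingEnd ℂ) α)^2 = α^2 + ((starRingEnd ℂ) α)^2 + 2*(α * (starRingEnd ℂ) α) := by ring
      rw [hp, hq] at this
      linear_combination -this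
    rw [hnum, hc]
    have : ((q:ℂ)) ≠ 0 := by exact_mod_cast hq0
    push_cast
    field_simp
  have hrint : IsIntegral ℤ ((4*c - 2 : ℚ)) := by
    have : IsIntegral ℤ ((algebraMap ℚ ℂ) (4*c-2)) := by
      rw [show (algebraMap ℚ ℂ) (4*c-2) = ((4*c-2:ℚ):ℂ) from rfl, ← hζval]; exact htint
    exact IsIntegral.tower_bot (algebraMap ℚ ℂ).injective this
  obtain ⟨m, hm⟩ := IsIntegrallyClosed.isIntegral_iff.mp hrint
  have hmq : (m:ℚ) = 4*c - 2 := hm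
  -- bound |m| ≤ 2
  have hcb0 : (0:ℝ) ≤ (c:ℝ) := hcos ▸ sq_nonneg _
  have hcb1 : (c:ℝ) ≤ 1 := by
    rw [← hcos]
    have := Real.neg_one_le_cos α.arg
    have := Real.cos_le_one α.arg
    nlinarith [Real.cos_le_one α.arg, Real.neg_one_le_cos α.arg]
  have hc0 : (0:ℚ) ≤ c := by exact_mod_cast hcb0
  have hc1 : c ≤ 1 := by exact_mod_cast hcb1
  have hm2a : (-2:ℤ) ≤ m := by
    exact_mod_cast (show (-2:ℚ) ≤ (m:ℚ) by rw [hmq]; linarith)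
  have hm2b : m ≤ (2:ℤ) := by
    exact_mod_cast (show (m:ℚ) ≤ 2 by rw [hmq]; linarith)
  rw [hcos]
  have hcval : c = ((m:ℚ) + 2)/4 := by linarith [hmq]
  interval_cases m <;> rw [hcval] <;>
    norm_num [Set.mem_insert_iff, Set.mem_singleton_iff]
end

section
/- If θ is a rational multiple of π and cos(θ)² is rational, then cos(θ)² ∈ {0, 1/4, 1/2, 3/4, 1}. -/
lemma den_sub_two (q : ℚ) : (q - 2).den = q.den := by
  refine Nat.dvd_antisymm ?_ ?_
  · have := Rat.add_den_dvd q (-2)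
    simpa [sub_eq_add_neg] using this
  · have := Rat.add_den_dvd (q - 2) 2
    simpa using this

lemma den_iter (q : ℚ) (n : ℕ) :
    ((fun x => x ^ 2 - 2)^[n] q).den = q.den ^ 2 ^ n := by
  induction n with
  | zero => simp
  | succ n ih =>
    rw [Function.iterate_succ_apply', den_sub_two, Rat.den_pow, ih, ← pow_mul, pow_succ]

/-- Generalized Niven theorem: if `θ` is a rational multiple of `π` and `cos θ ^ 2` is
rational, then `cos θ ^ 2 ∈ {0, 1/4, 1/2, 3/4, 1}`. -/
theorem stmt16 (θ : ℝ) (a b : ℤ) (hb : b ≠ 0) (hθ : θ = ((a : ℝ) / (b : ℝ)) * Real.pi)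
    (c : ℚ) (hc : Real.cos θ ^ 2 = (c : ℝ)) :
    Real.cos θ ^ 2 ∈ ({0, 1/4, 1/2, 3/4, 1} : Set ℝ) := by
  set α : ℝ := 2 * θ with hα
  set r : ℕ → ℚ := fun n => (fun x => x ^ 2 - 2)^[n] (4 * c - 2) with hr
  have key : ∀ n : ℕ, ((r n : ℝ)) = 2 * Real.cos ((2 : ℝ) ^ n * α) := by
    intro n
    induction n with
    | zero =>
      simp only [hr, Function.iterate_zero, id, pow_zero, one_mul]
      push_cast
      rw [hα, Real.cos_two_mul, ← hc]; ring
    | succ n ih =>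
      simp only [hr, Function.iterate_succ_apply'] at ih ⊢
      push_cast
      rw [ih]
      have h2 : (2:ℝ) ^ (n+1) * α = 2 * ((2:ℝ)^n * α) := by ring
      rw [h2, Real.cos_two_mul]; ring
  haveI : NeZero b.natAbs := ⟨by simpa using hb⟩
  obtain ⟨m, k, hmk, hcong⟩ : ∃ m k : ℕ, m ≠ k ∧
      ((2 : ZMod b.natAbs) ^ m = (2 : ZMod b.natAbs) ^ k) := by
    obtain ⟨m, k, hne, h⟩ := Finite.exists_ne_map_eq_of_infinite
      (fun n : ℕ => (2 : ZMod b.natAbs) ^ n)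
    exact ⟨m, k, hne, h⟩
  have hdvd : b ∣ (2 : ℤ) ^ k - 2 ^ m := by
    have h1 : (b.natAbs : ℤ) ∣ (2 : ℤ) ^ k - 2 ^ m := by
      refine (ZMod.intCast_zmod_eq_zero_iff_dvd ((2:ℤ)^k - 2^m) b.natAbs).mp ?_
      push_cast
      rw [hcong]; ring
    exact Int.natAbs_dvd.mp h1
  obtain ⟨d, hd⟩ := hdvd
  have hb' : (b : ℝ) ≠ 0 := Int.cast_ne_zero.mpr hb
  have hd' : ((2:ℝ)^k - 2^m) = (b : ℝ) * d := by exact_mod_cast congrArg (Int.cast : ℤ → ℝ) hd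
  have hcos : Real.cos ((2:ℝ)^k * α) = Real.cos ((2:ℝ)^m * α) := by
    have harg : (2:ℝ)^k * α = (2:ℝ)^m * α + ((d * a : ℤ) : ℝ) * (2 * Real.pi) := by
      rw [hα, hθ]
      push_cast
      field_simp
      linear_combination (a:ℝ) * hd'
    rw [harg, Real.cos_add_int_mul_two_pi]
  have hrk : r k = r m := by
    have h1 : ((r k : ℝ)) = ((r m : ℝ)) := by rw [key, key, hcos]
    exact_mod_cast h1
  have hden : (4 * c - 2).den ^ 2 ^ k = (4 * c - 2).den ^ 2 ^ m := by
    have h1 := congrArg Rat.den hrk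
    simpa only [hr, den_iter] using h1
  have hden1 : (4 * c - 2).den = 1 := by
    by_contra h
    have h2 : 2 ≤ (4 * c - 2).den := by
      have := (4 * c - 2).den_nz
      omega
    exact hmk (Nat.pow_right_injective le_rfl
      (Nat.pow_right_injective h2 hden)).symm
  obtain ⟨n, hn⟩ : ∃ n : ℤ, (4 * c - 2) = (n : ℚ) :=
    ⟨(4*c-2).num, ((Rat.den_eq_one_iff _).mp hden1).symm⟩
  have hr0 : ((4 * c - 2 : ℚ) : ℝ) = 2 * Real.cos α := by
    simpa [hr] using key 0
  have hnR : (n : ℝ) = 2 * Real.cos α := by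
    rw [← hr0, hn]; push_cast; ring
  have h1 : (-2 : ℝ) ≤ (n : ℝ) := by
    rw [hnR]; nlinarith [Real.neg_one_le_cos α]
  have h2 : (n : ℝ) ≤ 2 := by
    rw [hnR]; nlinarith [Real.cos_le_one α]
  have hn1 : -2 ≤ n := by exact_mod_cast h1
  have hn2 : n ≤ 2 := by exact_mod_cast h2
  rw [hc]
  simp only [Set.mem_insert_iff, Set.mem_singleton_iff]
  interval_cases n
  · left; have hcq : c = 0 := by push_cast at hn; linarith
    rw [hcq]; norm_num
  · right; left; have hcq : c = 1/4 := by push_cast at hn; linarith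
    rw [hcq]; norm_num
  · right; right; left; have hcq : c = 1/2 := by push_cast at hn; linarith
    rw [hcq]; norm_num
  · right; right; right; left; have hcq : c = 3/4 := by push_cast at hn; linarith
    rw [hcq]; norm_num
  · right; right; right; right; have hcq : c = 1 := by push_cast at hn; linarith
    rw [hcq]; norm_num
end
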